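/- arXiv:2309.12888 — 3 statements merged into one kernel-verified Lean document; each statement's English description precedes it below -/
import Mathlib

section
/- Let V be a finite-dimensional complex vector space with a nondegenerate symmetric bilinear form q, let ℓ = span(v) be an isotropic line (q(v,v) = 0, v ≠ 0), and let u : V → V be a q-skew-symmetric endomorphism with u(ℓ^⊥) ⊆ ℓ and u(ℓ) = 0, where ℓ^⊥ is the orthogonal of ℓ. Then there exists w ∈ ℓ^⊥ such that u(x) = q(w,x)·v − q(v,x)·w for all x ∈ V. -/
/-- Let `V` be a finite-dimensional complex vector space with a nondegenerate symmetric
bilinear form `q`, let `ℓ = span(v)` be an isotropic line (`q(v,v) = 0`, `v ≠ 0`), and let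
`u : V → V` be a `q`-skew-symmetric endomorphism with `u(ℓ^⊥) ⊆ ℓ` and `u(ℓ) = 0`, where
`ℓ^⊥ = {x | q(v,x) = 0}` is the orthogonal of `ℓ`. Then there exists `w ∈ ℓ^⊥` such that
`u(x) = q(w,x)·v − q(v,x)·w` for all `x ∈ V`. -/
theorem skew_map_eq_bivector_form
    (V : Type*) [AddCommGroup V] [Module ℂ V] [FiniteDimensional ℂ V]
    (q : LinearMap.BilinForm ℂ V) (hq : q.Nondegenerate)
    (hsymm : ∀ x y : V, q x y = q y x)
    (v : V) (hv : v ≠ 0) (hvv : q v v = 0)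
    (u : V →ₗ[ℂ] V)
    (hskew : ∀ x y : V, q (u x) y = - q x (u y))
    (hperp : ∀ x : V, q v x = 0 → u x ∈ Submodule.span ℂ {v})
    (hline : u v = 0) :
    ∃ w : V, q v w = 0 ∧ ∀ x : V, u x = q w x • v - q v x • w := by
  obtain ⟨e0, he0⟩ : ∃ e0, q v e0 ≠ 0 := by
    by_contra h
    push_neg at h
    exact hv (hq.1 v h)
  set e : V := (q v e0)⁻¹ • e0 with he
  have hve : q v e = 1 := by
    simp [he, smul_eq_mul]
    field_simp
  set w : V := -u e with hw
  have hvue : q v (u e) = 0 := by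
    have h1 := hskew v e
    rw [hline] at h1
    simp at h1
    exact h1
  have hvw : q v w = 0 := by simp [hw, hvue]
  have hwe : q w e = 0 := by
    have h1 := hskew e e
    have h2 := hsymm (u e) e
    have h3 : q (u e) e = 0 := by
      rw [h2] at h1 ⊢
      linear_combination h1 / 2
    simp [hw, h3]
  refine ⟨w, hvw, fun x => ?_⟩
  set x' : V := x - q v x • e with hx'
  have hvx' : q v x' = 0 := by
    simp [hx', hve]
  obtain ⟨t, ht⟩ := Submodule.mem_span_singleton.mp (hperp x' hvx')
  have hte : q (u x') e = t := by
    rw [← ht]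
    simp [hve]
  have htw : t = q w x' := by
    have h1 := hskew x' e
    have h2 := hsymm x' (u e)
    rw [← hte, h1, h2]
    simp [hw]
  have hux : u x = u x' + q v x • u e := by
    rw [hx']
    simp
  rw [hux, ← ht, htw]
  have hqwx : q w x' = q w x := by
    simp [hx', hwe]
  rw [hqwx]
  simp [hw]
end

section
/- Let G be a finite subgroup of SU(2) acting irreducibly on V = ℂ². Then G contains the element −id_V. -/
open Matrix



lemma trace_sq_aux (A : Matrix (Fin 2) (Fin 2) ℂ) :
    (A * A).trace = A.trace ^ 2 - 2 * A.det := by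
  simp [Matrix.trace_fin_two, Matrix.mul_apply, Fin.sum_univ_two, Matrix.det_fin_two]
  ring

lemma sq_eq_one_aux {A : Matrix (Fin 2) (Fin 2) ℂ} (h1 : A * A = 1) (h2 : A.det = 1) :
    A = 1 ∨ A = -1 := by
  have h00 := congrFun (congrFun h1 0) 0
  have h01 := congrFun (congrFun h1 0) 1
  have h11 := congrFun (congrFun h1 1) 1
  simp [Matrix.mul_apply, Fin.sum_univ_two, Matrix.one_apply] at h00 h01 h11
  rw [Matrix.det_fin_two] at h2
  set a := A 0 0 with ha'; set b := A 0 1 with hb'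
  set c := A 1 0 with hc'; set d := A 1 1 with hd'
  have hs : a + d ≠ 0 := by
    intro h
    have : (2 : ℂ) = 0 := by linear_combination -h00 - h2 + a * h
    norm_num at this
  have hb : b = 0 := by
    have : b * (a + d) = 0 := by linear_combination h01
    exact (mul_eq_zero.mp this).resolve_right hs
  have ha2 : a * a = 1 := by linear_combination h00 - c * hb
  have h2' : a * d = 1 := by linear_combination h2 + c * hb
  have hd : d = a := by linear_combination a * h2' - d * ha2
  have hc : c = 0 := by
    have : c * (a + d) = 0 := by
      have h10 := congrFun (congrFun h1 1) 0
      simp [Matrix.mul_apply, Fin.sum_univ_two, Matrix.one_apply] at h10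
      linear_combination h10
    exact (mul_eq_zero.mp this).resolve_right hs
  rcases mul_self_eq_one_iff.mp ha2 with h | h
  · left
    rw [Matrix.eta_fin_two A, ← ha', ← hb', ← hc', ← hd', hb, hc, hd, h]
    exact Matrix.one_fin_two.symm
  · right
    rw [Matrix.eta_fin_two A, ← ha', ← hb', ← hc', ← hd', hb, hc, hd, h]
    ext i j
    fin_cases i <;> fin_cases j <;> simp [Matrix.one_apply]

lemma std_mul_aux (A B : Matrix (Fin 2) (Fin 2) ℂ) (i j : Fin 2) :
    (A * (Matrix.single i j 1 : Matrix (Fin 2) (Fin 2) ℂ) * B) i j = A i i * B j j := by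
  simp [Matrix.mul_apply, Matrix.single, Finset.mul_sum, Finset.sum_mul,
    ite_and, Finset.sum_ite_eq, Finset.sum_ite_eq']

/-- Let `G` be a finite subgroup of `SU(2)` acting irreducibly on `V = ℂ²`. Then `G`
contains the element `−id_V`. We realize `SU(2)` as the subgroup of the unitary group
`U(2)` consisting of matrices of determinant `1`; irreducibility means that the only
subspaces of `ℂ²` invariant under all elements of `G` are `⊥` and `⊤`. -/
theorem neg_one_mem_of_finite_irreducible_SU2
    (G : Subgroup (unitaryGroup (Fin 2) ℂ)) [Finite G]
    (hSU : ∀ g ∈ G, (g : Matrix (Fin 2) (Fin 2) ℂ).det = 1)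
    (hirr : ∀ W : Submodule ℂ (Fin 2 → ℂ),
      (∀ g ∈ G, ∀ x ∈ W, (g : Matrix (Fin 2) (Fin 2) ℂ).mulVec x ∈ W) →
        W = ⊥ ∨ W = ⊤) :
    ∃ g ∈ G, (g : Matrix (Fin 2) (Fin 2) ℂ) = -1 := by
  by_contra hcon
  push_neg at hcon
  haveI : Fintype G := Fintype.ofFinite G
  set ρ : G → Matrix (Fin 2) (Fin 2) ℂ :=
    fun g => ((g : unitaryGroup (Fin 2) ℂ) : Matrix (Fin 2) (Fin 2) ℂ) with hρ
  have hmul : ∀ a b : G, ρ (a * b) = ρ a * ρ b := fun a b => rfl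
  have hone : ρ 1 = 1 := rfl
  have hdet : ∀ g : G, (ρ g).det = 1 := fun g => hSU g g.2
  have hne : ∀ g : G, ρ g ≠ -1 := fun g => hcon g g.2
  have hinvmul : ∀ g : G, ρ g⁻¹ * ρ g = 1 := by
    intro g; rw [← hmul, inv_mul_cancel, hone]
  have hinj : ∀ g : G, ρ g = 1 → g = 1 := by
    intro g h
    exact Subtype.ext (Subtype.ext h)
  have htrinv : ∀ g : G, (ρ g⁻¹).trace = (ρ g).trace := by
    intro g
    have hadj : ρ g⁻¹ = (ρ g).adjugate := by
      calc ρ g⁻¹ = ρ g⁻¹ * (ρ g * (ρ g).adjugate) := by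
            rw [Matrix.mul_adjugate, hdet, one_smul, mul_one]
        _ = (ρ g⁻¹ * ρ g) * (ρ g).adjugate := by rw [mul_assoc]
        _ = (ρ g).adjugate := by rw [hinvmul, one_mul]
    rw [hadj, Matrix.adjugate_fin_two, Matrix.trace_fin_two_of, Matrix.trace_fin_two, add_comm]
  -- the group has odd order
  have hodd : ¬ 2 ∣ Nat.card G := by
    intro h2
    haveI : Fact (Nat.Prime 2) := ⟨Nat.prime_two⟩
    rw [Nat.card_eq_fintype_card] at h2
    obtain ⟨g, hg⟩ := exists_prime_orderOf_dvd_card 2 h2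
    have hgsq : ρ g * ρ g = 1 := by
      rw [← hmul]
      have h1 := pow_orderOf_eq_one g
      rw [hg, sq] at h1
      rw [h1, hone]
    rcases sq_eq_one_aux hgsq (hdet g) with h | h
    · have := hinj g h
      rw [this, orderOf_one] at hg
      norm_num at hg
    · exact hne g h
  -- Schur's lemma
  have schur : ∀ A : Matrix (Fin 2) (Fin 2) ℂ,
      (∀ g : G, ρ g * A = A * ρ g) → ∃ c : ℂ, A = c • 1 := by
    intro A hA
    obtain ⟨c, hc⟩ := Module.End.exists_eigenvalue (Matrix.mulVecLin A)
    have hWinv : ∀ g ∈ G, ∀ x ∈ Module.End.eigenspace A.mulVecLin c,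
        (g : Matrix (Fin 2) (Fin 2) ℂ).mulVec x ∈ Module.End.eigenspace A.mulVecLin c := by
      intro g hg x hx
      rw [Module.End.mem_eigenspace_iff] at hx ⊢
      show A.mulVec ((ρ ⟨g, hg⟩).mulVec x) = c • ((ρ ⟨g, hg⟩).mulVec x)
      rw [Matrix.mulVec_mulVec, ← hA ⟨g, hg⟩, ← Matrix.mulVec_mulVec]
      have hx' : A.mulVec x = c • x := hx
      rw [hx', Matrix.mulVec_smul]
    rcases hirr _ hWinv with h | h
    · exact absurd h hc
    · refine ⟨c, ?_⟩
      have hall : ∀ x, A.mulVec x = c • x := fun x =>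
        Module.End.mem_eigenspace_iff.mp (h ▸ Submodule.mem_top)
      ext i j
      have h2 := congrFun (hall (Pi.single j 1)) i
      rw [Matrix.mulVec_single_one] at h2
      simp only [Matrix.col_apply] at h2
      rw [h2]
      simp [Matrix.one_apply, Pi.single_apply, mul_comm]
  -- the sum of traces vanishes
  have hsum0 : ∑ g : G, (ρ g).trace = 0 := by
    set P : Matrix (Fin 2) (Fin 2) ℂ := ∑ g : G, ρ g with hP
    have hfix : ∀ h : G, ρ h * P = P := by
      intro h
      rw [hP, Finset.mul_sum]
      calc ∑ g : G, ρ h * ρ g = ∑ g : G, ρ (h * g) :=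
            Finset.sum_congr rfl fun g _ => (hmul h g).symm
        _ = ∑ g : G, ρ g :=
            Fintype.sum_bijective _ (Group.mulLeft_bijective h) _ _ (fun g => rfl)
    have hWinv : ∀ g ∈ G, ∀ x ∈ LinearMap.range P.mulVecLin,
        (g : Matrix (Fin 2) (Fin 2) ℂ).mulVec x ∈ LinearMap.range P.mulVecLin := by
      intro g hg x hx
      obtain ⟨y, hy⟩ := hx
      refine ⟨y, ?_⟩
      rw [← hy]
      show P.mulVec y = (ρ ⟨g, hg⟩).mulVec (P.mulVec y)
      rw [Matrix.mulVec_mulVec, hfix ⟨g, hg⟩]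
    rcases hirr _ hWinv with h | h
    · have hz : P.mulVecLin = 0 := LinearMap.range_eq_bot.mp h
      have hP0 : P = 0 := by
        ext i j
        have h1 : P.mulVec (Pi.single j 1) = 0 := by
          have := LinearMap.ext_iff.mp hz (Pi.single j 1)
          simpa using this
        have := congrFun h1 i
        rw [Matrix.mulVec_single] at this
        simpa using this
      rw [← Matrix.trace_sum, ← hP, hP0, Matrix.trace_zero]
    · -- then all elements act trivially, contradicting irreducibility
      exfalso
      have hall : ∀ h0 : G, ρ h0 = 1 := by
        intro h0
        have hs : ∀ x : Fin 2 → ℂ, (ρ h0).mulVec x = x := by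
          intro x
          obtain ⟨y, hy⟩ := LinearMap.range_eq_top.mp h x
          rw [← hy]
          show (ρ h0).mulVec (P.mulVec y) = P.mulVec y
          rw [Matrix.mulVec_mulVec, hfix h0]
        ext i j
        have := congrFun (hs (Pi.single j 1)) i
        rw [Matrix.mulVec_single] at this
        simpa [Matrix.one_apply, Pi.single_apply, eq_comm] using this
      have hW0 : ∀ g ∈ G, ∀ x ∈ Submodule.span ℂ {(Pi.single 0 1 : Fin 2 → ℂ)},
          (g : Matrix (Fin 2) (Fin 2) ℂ).mulVec x ∈
            Submodule.span ℂ {(Pi.single 0 1 : Fin 2 → ℂ)} := by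
        intro g hg x hx
        have h1 : (g : Matrix (Fin 2) (Fin 2) ℂ) = 1 := hall ⟨g, hg⟩
        rw [h1, Matrix.one_mulVec]
        exact hx
      rcases hirr _ hW0 with h0 | h0
      · have : (Pi.single 0 1 : Fin 2 → ℂ) ∈ Submodule.span ℂ {(Pi.single 0 1 : Fin 2 → ℂ)} :=
          Submodule.mem_span_singleton_self _
        rw [h0, Submodule.mem_bot] at this
        have := congrFun this 0
        simp at this
      · have : (Pi.single 1 1 : Fin 2 → ℂ) ∈ Submodule.span ℂ {(Pi.single 0 1 : Fin 2 → ℂ)} := by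
          rw [h0]; trivial
        obtain ⟨a, ha⟩ := Submodule.mem_span_singleton.mp this
        have := congrFun ha 1
        simp [Pi.single_apply] at this
  -- the sum of squares of traces equals the cardinality
  have hS : ∀ i j : Fin 2, 2 * (∑ g : G, (ρ g) i i * (ρ g⁻¹) j j)
      = (Nat.card G : ℂ) * (if i = j then 1 else 0) := by
    intro i j
    set E : Matrix (Fin 2) (Fin 2) ℂ := Matrix.single i j 1 with hE
    set Φ : Matrix (Fin 2) (Fin 2) ℂ := ∑ g : G, ρ g * E * ρ g⁻¹ with hΦ
    have hcomm : ∀ h : G, ρ h * Φ = Φ * ρ h := by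
      intro h
      rw [hΦ, Finset.mul_sum, Finset.sum_mul]
      calc ∑ g : G, ρ h * (ρ g * E * ρ g⁻¹)
          = ∑ g : G, ρ (h * g) * E * ρ (h * g)⁻¹ * ρ h := by
            refine Finset.sum_congr rfl fun g _ => ?_
            have h1 : ρ g⁻¹ = ρ (h * g)⁻¹ * ρ h := by
              rw [← hmul]; congr 1; group
            rw [hmul, h1]
            simp only [mul_assoc]
        _ = ∑ g : G, ρ g * E * ρ g⁻¹ * ρ h :=
            Fintype.sum_bijective _ (Group.mulLeft_bijective h) _ _ (fun g => rfl)
    obtain ⟨c, hc⟩ := schur Φ hcomm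
    have htrE : E.trace = if i = j then 1 else 0 := by
      fin_cases i <;> fin_cases j <;>
        simp [hE, Matrix.trace_fin_two, Matrix.single]
    have htr : Φ.trace = (Nat.card G : ℂ) * E.trace := by
      rw [hΦ, Matrix.trace_sum]
      have h1 : ∀ g : G, (ρ g * E * ρ g⁻¹).trace = E.trace := by
        intro g
        rw [Matrix.trace_mul_cycle, hinvmul, one_mul]
      rw [Finset.sum_congr rfl fun g _ => h1 g]
      simp [Nat.card_eq_fintype_card, mul_comm]
    have h2c : 2 * c = (Nat.card G : ℂ) * (if i = j then 1 else 0) := by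
      rw [← htrE, ← htr, hc]
      simp [Matrix.trace_smul, Matrix.trace_one]
      try ring
    have hSij : (∑ g : G, (ρ g) i i * (ρ g⁻¹) j j) = Φ i j := by
      rw [hΦ, Matrix.sum_apply]
      exact Finset.sum_congr rfl fun g _ => (std_mul_aux (ρ g) (ρ g⁻¹) i j).symm
    have hΦij : Φ i j = c * (if i = j then 1 else 0) := by
      rw [hc]; simp [Matrix.one_apply]
    rw [hSij, hΦij, ← mul_assoc, h2c]
    by_cases hij : i = j <;> simp [hij]
  have hsum2 : ∑ g : G, (ρ g).trace ^ 2 = (Nat.card G : ℂ) := by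
    have expand : ∀ g : G, (ρ g).trace ^ 2
        = ∑ i : Fin 2, ∑ j : Fin 2, (ρ g) i i * (ρ g⁻¹) j j := by
      intro g
      have h := htrinv g
      rw [Matrix.trace_fin_two, Matrix.trace_fin_two] at h
      rw [Matrix.trace_fin_two, Fin.sum_univ_two, Fin.sum_univ_two, Fin.sum_univ_two]
      linear_combination (-(ρ g 0 0) - ρ g 1 1) * h
    rw [Finset.sum_congr rfl fun g _ => expand g]
    rw [Finset.sum_comm]
    have swap2 : ∑ i : Fin 2, ∑ g : G, ∑ j : Fin 2, (ρ g) i i * (ρ g⁻¹) j j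
        = ∑ i : Fin 2, ∑ j : Fin 2, ∑ g : G, (ρ g) i i * (ρ g⁻¹) j j :=
      Finset.sum_congr rfl fun i _ => Finset.sum_comm
    rw [swap2]
    have h2 : (2 : ℂ) * (∑ i : Fin 2, ∑ j : Fin 2, ∑ g : G, (ρ g) i i * (ρ g⁻¹) j j)
        = 2 * (Nat.card G : ℂ) := by
      rw [Finset.mul_sum]
      rw [Finset.sum_congr rfl fun i _ => Finset.mul_sum _ _ _]
      rw [Finset.sum_congr rfl fun i (_ : i ∈ Finset.univ) =>
        Finset.sum_congr rfl fun j (_ : j ∈ Finset.univ) => hS i j]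
      simp [Fin.sum_univ_two]
      try ring
    exact mul_left_cancel₀ (two_ne_zero (α := ℂ)) h2
  -- combine everything
  have hcop : (Nat.card G).Coprime 2 := by
    rw [Nat.coprime_two_right]
    exact Nat.not_even_iff_odd.mp (fun he => hodd he.two_dvd)
  have hbij : ∑ g : G, (ρ (g ^ 2)).trace = ∑ g : G, (ρ g).trace :=
    Fintype.sum_bijective _ (powCoprime hcop).bijective _ _ (fun g => rfl)
  have key : ∀ g : G, (ρ (g ^ 2)).trace = (ρ g).trace ^ 2 - 2 := by
    intro g
    have : ρ (g ^ 2) = ρ g * ρ g := by rw [sq, hmul]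
    rw [this, trace_sq_aux, hdet, mul_one]
  rw [hsum0] at hbij
  simp only [key, Finset.sum_sub_distrib, hsum2, Finset.sum_const] at hbij
  have hcard : (Nat.card G : ℂ) = 0 := by
    have hc : (Finset.univ : Finset G).card = Fintype.card G := rfl
    rw [hc, ← Nat.card_eq_fintype_card] at hbij
    have h0 : (Nat.card G : ℂ) - (Nat.card G : ℂ) * 2 = 0 := by
      rw [← hbij]; push_cast; ring
    linear_combination -h0
  have : Nat.card G ≠ 0 := Nat.card_pos.ne'
  exact this (by exact_mod_cast hcard)
end

section
/- The ring of invariants of the binary dihedral group of order 4n acting on ℂ[x,y] (via its standard 2-dimensional representation in SU(2)) is generated by three homogeneous polynomials X, Y, Z of degrees 2n+2, 2n, 4 respectively, satisfying the single relation X² + Y²Z + Z^{n+1} = 0. -/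
open Matrix MvPolynomial

noncomputable section BDproof
set_option linter.unusedSectionVars false
set_option linter.unnecessarySimpa false
set_option linter.unnecessarySeqFocus false

def Pp (n : ℕ) : MvPolynomial (Fin 2) ℂ :=
  C (1/2 : ℂ) * (X 0 * X 1 * (X 0 ^ (2*n) - X 1 ^ (2*n)))
def Qp (n : ℕ) : MvPolynomial (Fin 2) ℂ :=
  C (Complex.I/2) * (X 0 ^ (2*n) + X 1 ^ (2*n))
def Rp : MvPolynomial (Fin 2) ℂ := X 0 ^ 2 * X 1 ^ 2
def τ : MvPolynomial (Fin 2) ℂ →ₐ[ℂ] MvPolynomial (Fin 2) ℂ := aeval ![X 0, -X 1]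

def bdact (g : GL (Fin 2) ℂ) : MvPolynomial (Fin 2) ℂ →ₐ[ℂ] MvPolynomial (Fin 2) ℂ :=
  aeval (fun i : Fin 2 =>
    ∑ j : Fin 2, C (((g⁻¹ : GL (Fin 2) ℂ) : Matrix (Fin 2) (Fin 2) ℂ) i j) * X j)

lemma bdact_one (f : MvPolynomial (Fin 2) ℂ) : bdact 1 f = f := by
  have : bdact (1 : GL (Fin 2) ℂ) = aeval X := by
    unfold bdact
    congr 1
    funext i
    simp [Matrix.one_apply, Finset.sum_ite_eq, Fin.sum_univ_two]
  rw [this, aeval_X_left, AlgHom.id_apply]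

lemma bdact_mul (g h : GL (Fin 2) ℂ) (f : MvPolynomial (Fin 2) ℂ) :
    bdact (g * h) f = bdact g (bdact h f) := by
  have h1 : bdact g (bdact h f) = ((bdact g).comp (bdact h)) f := rfl
  rw [h1]
  unfold bdact
  rw [comp_aeval]
  have : (fun i : Fin 2 =>
      ∑ j : Fin 2, C (((g*h)⁻¹ : GL (Fin 2) ℂ).val i j) * X j) =
      (fun i : Fin 2 => (aeval fun i : Fin 2 =>
        ∑ j : Fin 2, C ((g⁻¹ : GL (Fin 2) ℂ).val i j) * X j)
        (∑ j : Fin 2, C ((h⁻¹ : GL (Fin 2) ℂ).val i j) * X j)) := by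
    funext i
    have hm : ((g*h)⁻¹ : GL (Fin 2) ℂ).val = (h⁻¹ : GL (Fin 2) ℂ).val * (g⁻¹ : GL (Fin 2) ℂ).val := by
      rw [_root_.mul_inv_rev]; rfl
    rw [hm]
    rw [map_sum]
    simp only [_root_.map_mul, aeval_C, aeval_X, algebraMap_eq, Matrix.mul_apply,
      Finset.mul_sum, Finset.sum_mul, C_mul]
    rw [Finset.sum_comm]
    apply Finset.sum_congr rfl
    intro j _
    rw [map_sum, Finset.sum_mul]
    apply Finset.sum_congr rfl
    intro k _
    rw [C_mul]
    ring
  rw [this]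


lemma bdactA (ζ : ℂ) (hz : ζ ≠ 0) (A : GL (Fin 2) ℂ)
    (hA : (A : Matrix (Fin 2) (Fin 2) ℂ) = !![ζ, 0; 0, ζ⁻¹]) :
    bdact A = aeval ![C ζ⁻¹ * X 0, C ζ * X 1] := by
  have hinv : ((A⁻¹ : GL (Fin 2) ℂ) : Matrix (Fin 2) (Fin 2) ℂ) = !![ζ⁻¹, 0; 0, ζ] := by
    rw [Matrix.coe_units_inv]
    apply Matrix.inv_eq_right_inv
    rw [hA]
    ext i j
    fin_cases i <;> fin_cases j <;>
      simp [Matrix.mul_apply, Fin.sum_univ_two, hz, mul_inv_cancel₀, inv_mul_cancel₀]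
  unfold bdact
  congr 1
  funext i
  rw [hinv]
  fin_cases i <;> simp [Fin.sum_univ_two]

lemma bdactB (B : GL (Fin 2) ℂ)
    (hB : (B : Matrix (Fin 2) (Fin 2) ℂ) = !![0, 1; -1, 0]) :
    bdact B = aeval ![-X 1, X 0] := by
  have hinv : ((B⁻¹ : GL (Fin 2) ℂ) : Matrix (Fin 2) (Fin 2) ℂ) = !![0, -1; 1, 0] := by
    rw [Matrix.coe_units_inv]
    apply Matrix.inv_eq_right_inv
    rw [hB]
    ext i j
    fin_cases i <;> fin_cases j <;> simp [Matrix.mul_apply, Fin.sum_univ_two]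
  unfold bdact
  congr 1
  funext i
  rw [hinv]
  fin_cases i <;> simp [Fin.sum_univ_two]


lemma Pp_hom (n : ℕ) : (Pp n).IsHomogeneous (2*n+2) := by
  have h1 : (X 0 * X 1 * ((X 0:MvPolynomial (Fin 2) ℂ) ^ (2*n) - X 1 ^ (2*n))).IsHomogeneous (1+1+2*n) := by
    apply MvPolynomial.IsHomogeneous.mul
    · exact ((isHomogeneous_X ℂ (0:Fin 2)).mul (isHomogeneous_X ℂ (1:Fin 2)))
    · have h0 := (isHomogeneous_X ℂ (0:Fin 2)).pow (2*n)
      have h1 := (isHomogeneous_X ℂ (1:Fin 2)).pow (2*n)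
      rw [one_mul] at h0 h1
      exact h0.sub h1
  have := (isHomogeneous_C (Fin 2) ((1:ℂ)/2)).mul h1
  simpa [Pp, show 0+(1+1+2*n) = 2*n+2 by ring] using this

lemma Qp_hom (n : ℕ) : (Qp n).IsHomogeneous (2*n) := by
  have h1 : ((X 0:MvPolynomial (Fin 2) ℂ) ^ (2*n) + X 1 ^ (2*n)).IsHomogeneous (2*n) := by
    have h0 := (isHomogeneous_X ℂ (0:Fin 2)).pow (2*n)
    have h1 := (isHomogeneous_X ℂ (1:Fin 2)).pow (2*n)
    rw [one_mul] at h0 h1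
    exact h0.add h1
  have := (isHomogeneous_C (Fin 2) (Complex.I/2)).mul h1
  simpa [Qp] using this

lemma Rp_hom : Rp.IsHomogeneous 4 := by
  have := ((isHomogeneous_X ℂ (0:Fin 2)).pow 2).mul ((isHomogeneous_X ℂ (1:Fin 2)).pow 2)
  simpa [Rp] using this


section Ainv
variable {n : ℕ} {ζ : ℂ}
variable (hz : ζ ≠ 0) (hz2 : ζ ^ (2*n) = 1)
include hz hz2

lemma e0 : ((C ζ⁻¹ * X 0 : MvPolynomial (Fin 2) ℂ)) ^ (2*n) = X 0 ^ (2*n) := by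
  rw [mul_pow, ← C_pow, inv_pow, hz2, inv_one, C_1, one_mul]

lemma e1 : ((C ζ * X 1 : MvPolynomial (Fin 2) ℂ)) ^ (2*n) = X 1 ^ (2*n) := by
  rw [mul_pow, ← C_pow, hz2, C_1, one_mul]

lemma actA_P : aeval ![C ζ⁻¹ * X 0, C ζ * X 1] (Pp n) = Pp n := by
  have e2 : (C ζ⁻¹ : MvPolynomial (Fin 2) ℂ) * C ζ = 1 := by
    rw [← C_mul, inv_mul_cancel₀ hz, C_1]
  simp only [Pp, _root_.map_mul, map_sub, map_pow, aeval_C, aeval_X, algebraMap_eq,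
    Matrix.cons_val_zero, Matrix.cons_val_one, Matrix.head_cons]
  rw [e0 hz hz2, e1 hz hz2]
  linear_combination (C (1/2:ℂ) * (X 0 * X 1 * ((X 0:MvPolynomial (Fin 2) ℂ) ^ (2*n) - X 1 ^ (2*n)))) * e2

lemma actA_Q : aeval ![C ζ⁻¹ * X 0, C ζ * X 1] (Qp n) = Qp n := by
  simp only [Qp, _root_.map_mul, map_add, map_pow, aeval_C, aeval_X, algebraMap_eq,
    Matrix.cons_val_zero, Matrix.cons_val_one, Matrix.head_cons]
  rw [e0 hz hz2, e1 hz hz2]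

lemma actA_R : aeval ![C ζ⁻¹ * X 0, C ζ * X 1] (Rp) = Rp := by
  have e3 : (C ζ⁻¹ : MvPolynomial (Fin 2) ℂ)^2 * (C ζ)^2 = 1 := by
    rw [← C_pow, ← C_pow, ← C_mul, ← mul_pow, inv_mul_cancel₀ hz, one_pow, C_1]
  simp only [Rp, _root_.map_mul, map_pow, aeval_C, aeval_X, algebraMap_eq,
    Matrix.cons_val_zero, Matrix.cons_val_one, Matrix.head_cons]
  linear_combination ((X 0:MvPolynomial (Fin 2) ℂ)^2 * X 1^2) * e3

end Ainv

lemma neg_pow_even (p : MvPolynomial (Fin 2) ℂ) : (-p) ^ (2*n) = p ^ (2*n) :=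
  (Even.neg_pow ⟨n, by ring⟩ p)

lemma actB_P : aeval ![-X 1, X 0] (Pp n) = Pp n := by
  simp only [Pp, _root_.map_mul, map_sub, map_pow, map_neg, aeval_C, aeval_X, algebraMap_eq,
    Matrix.cons_val_zero, Matrix.cons_val_one, Matrix.head_cons]
  rw [neg_pow_even]
  ring

lemma actB_Q : aeval ![-X 1, X 0] (Qp n) = Qp n := by
  simp only [Qp, _root_.map_mul, map_add, map_pow, map_neg, aeval_C, aeval_X, algebraMap_eq,
    Matrix.cons_val_zero, Matrix.cons_val_one, Matrix.head_cons]
  rw [neg_pow_even]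
  ring

lemma actB_R : aeval ![-X 1, X 0] (Rp) = Rp := by
  simp only [Rp, _root_.map_mul, map_pow, map_neg, aeval_X,
    Matrix.cons_val_zero, Matrix.cons_val_one, Matrix.head_cons]
  ring


/-- stabilizer of a polynomial -/
def bdstab (p : MvPolynomial (Fin 2) ℂ) : Subgroup (GL (Fin 2) ℂ) where
  carrier := {g | bdact g p = p}
  one_mem' := bdact_one p
  mul_mem' := by
    intro a b ha hb
    show bdact (a*b) p = p
    rw [bdact_mul, hb, ha]
  inv_mem' := by
    intro a ha
    show bdact a⁻¹ p = p
    conv_lhs => rw [← ha]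
    rw [← bdact_mul, inv_mul_cancel, bdact_one]

lemma closure_le_stab (A B : GL (Fin 2) ℂ) (p : MvPolynomial (Fin 2) ℂ)
    (hA : bdact A p = p) (hB : bdact B p = p) :
    Subgroup.closure {A, B} ≤ bdstab p := by
  rw [Subgroup.closure_le]
  intro g hg
  rcases hg with h | h <;> subst h <;> assumption


lemma fin2_ext {M : Type*} [AddCommMonoid M] (d e : Fin 2 →₀ M) (h0 : d 0 = e 0) (h1 : d 1 = e 1) : d = e := by
  ext a
  fin_cases a <;> assumption

lemma pair_apply0 (a b : ℕ) : ((Finsupp.single (0:Fin 2) a + Finsupp.single 1 b : Fin 2 →₀ ℕ)) 0 = a := by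
  simp [Finsupp.single_apply]

lemma pair_apply1 (a b : ℕ) : ((Finsupp.single (0:Fin 2) a + Finsupp.single 1 b : Fin 2 →₀ ℕ)) 1 = b := by
  simp [Finsupp.single_apply]

lemma fin2_eq_pair (d : Fin 2 →₀ ℕ) : d = Finsupp.single 0 (d 0) + Finsupp.single 1 (d 1) := by
  apply fin2_ext <;> simp [pair_apply0, pair_apply1]

lemma monomial_eq_two (d : Fin 2 →₀ ℕ) (c : ℂ) :
    (monomial d c : MvPolynomial (Fin 2) ℂ) = C c * (X 0 ^ (d 0) * X 1 ^ (d 1)) := by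
  rw [monomial_eq]
  congr 1
  rw [Finsupp.prod_fintype _ _ (fun i => pow_zero _), Fin.prod_univ_two]

lemma X_pow_pair (a b : ℕ) :
    (X 0 ^ a * X 1 ^ b : MvPolynomial (Fin 2) ℂ) =
      monomial (Finsupp.single 0 a + Finsupp.single 1 b) 1 := by
  rw [X_pow_eq_monomial, X_pow_eq_monomial, monomial_mul, mul_one]

lemma pair_eq_iff (a b a' b' : ℕ) :
    (Finsupp.single (0:Fin 2) a + Finsupp.single 1 b = Finsupp.single 0 a' + Finsupp.single 1 b')
      ↔ (a = a' ∧ b = b') := by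
  constructor
  · intro h
    constructor
    · have := congrArg (fun d => d 0) h
      simpa [pair_apply0] using this
    · have := congrArg (fun d => d 1) h
      simpa [pair_apply1] using this
  · rintro ⟨rfl, rfl⟩; rfl


abbrev Rng (n : ℕ) : Subalgebra ℂ (MvPolynomial (Fin 2) ℂ) :=
  (aeval (R := ℂ) ![Pp n, Qp n, Rp]).range

lemma Pp_mem : Pp n ∈ Rng n := ⟨X 0, by simp⟩
lemma Qp_mem : Qp n ∈ Rng n := ⟨X 1, by simp⟩
lemma Rp_mem : Rp ∈ Rng n := ⟨X 2, by simp⟩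

lemma VW_mem : (X 0 ^ (2*n) * X 1 ^ (2*n) : MvPolynomial (Fin 2) ℂ) ∈ Rng n := by
  have : (X 0 ^ (2*n) * X 1 ^ (2*n) : MvPolynomial (Fin 2) ℂ) = Rp ^ n := by
    rw [Rp, mul_pow, ← pow_mul, ← pow_mul]
  rw [this]
  exact pow_mem Rp_mem n

lemma VpW_mem : (X 0 ^ (2*n) + X 1 ^ (2*n) : MvPolynomial (Fin 2) ℂ) ∈ Rng n := by
  have h : (X 0 ^ (2*n) + X 1 ^ (2*n) : MvPolynomial (Fin 2) ℂ) = C (-2*Complex.I) * Qp n := by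
    rw [Qp, ← mul_assoc, ← C_mul]
    have : (-2*Complex.I) * (Complex.I/2) = 1 := by
      field_simp
      rw [Complex.I_sq]
      norm_num
    rw [this, C_1, one_mul]
  rw [h, ← smul_eq_C_mul]
  exact (Rng n).smul_mem Qp_mem _

lemma newton (k : ℕ) :
    ((X 0 ^ (2*n)) ^ k + (X 1 ^ (2*n)) ^ k ∈ Rng n) ∧
    ∃ D ∈ Rng n, (X 0 ^ (2*n) : MvPolynomial (Fin 2) ℂ) ^ k - (X 1 ^ (2*n)) ^ k
      = (X 0 ^ (2*n) - X 1 ^ (2*n)) * D := by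
  induction k using Nat.strong_induction_on with
  | _ k ih =>
    match k with
    | 0 =>
      refine ⟨by simpa using (Rng n).add_mem (Rng n).one_mem (Rng n).one_mem, 0, (Rng n).zero_mem, by simp⟩
    | 1 =>
      refine ⟨by simpa using VpW_mem, 1, (Rng n).one_mem, by simp⟩
    | (k+2) =>
      obtain ⟨h0p, D0, hD0m, hD0⟩ := ih k (by omega)
      obtain ⟨h1p, D1, hD1m, hD1⟩ := ih (k+1) (by omega)
      constructor
      · have hid : ((X 0:MvPolynomial (Fin 2) ℂ) ^ (2*n)) ^ (k+2) + (X 1 ^ (2*n)) ^ (k+2)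
            = (X 0 ^ (2*n) + X 1 ^ (2*n)) * ((X 0 ^ (2*n)) ^ (k+1) + (X 1 ^ (2*n)) ^ (k+1))
              - (X 0 ^ (2*n) * X 1 ^ (2*n)) * ((X 0 ^ (2*n)) ^ k + (X 1 ^ (2*n)) ^ k) := by
          ring
        rw [hid]
        exact (Rng n).sub_mem ((Rng n).mul_mem VpW_mem h1p) ((Rng n).mul_mem VW_mem h0p)
      · refine ⟨(X 0 ^ (2*n) + X 1 ^ (2*n)) * D1 - (X 0 ^ (2*n) * X 1 ^ (2*n)) * D0,
          (Rng n).sub_mem ((Rng n).mul_mem VpW_mem hD1m) ((Rng n).mul_mem VW_mem hD0m), ?_⟩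
        linear_combination (X 0 ^ (2*n) + X 1 ^ (2*n) : MvPolynomial (Fin 2) ℂ) * hD1
          - (X 0 ^ (2*n) * X 1 ^ (2*n) : MvPolynomial (Fin 2) ℂ) * hD0


variable {n : ℕ} (Sa : Subalgebra ℂ (MvPolynomial (Fin 2) ℂ))
  (hP : Pp n ∈ Sa) (hR : Rp ∈ Sa)
  (hplus : ∀ k : ℕ, ((X 0 ^ (2*n)) ^ k + (X 1 ^ (2*n)) ^ k ∈ Sa))
  (hminus : ∀ k : ℕ, ∃ D ∈ Sa, (X 0 ^ (2*n) : MvPolynomial (Fin 2) ℂ) ^ k - (X 1 ^ (2*n)) ^ k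
      = (X 0 ^ (2*n) - X 1 ^ (2*n)) * D)

include hP hR hplus hminus in
lemma pair_mem_abstract (b k : ℕ) :
    (X 0 ^ (b + 2*n*k) * X 1 ^ b
      + C ((-1:ℂ) ^ (b + 2*n*k)) * (X 0 ^ b * X 1 ^ (b + 2*n*k)) : MvPolynomial (Fin 2) ℂ) ∈ Sa := by
  have hsign : ((-1:ℂ)) ^ (b + 2*n*k) = (-1) ^ b := by
    rw [pow_add, pow_mul]
    simp
  rw [hsign]
  rcases Nat.even_or_odd b with ⟨c, hc⟩ | ⟨c, hc⟩
  · -- b = 2c even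
    have hs1 : ((-1:ℂ)) ^ b = 1 := by
      rw [hc]; exact Even.neg_one_pow ⟨c, rfl⟩
    rw [hs1, C_1, one_mul]
    have hid : (X 0 ^ (b + 2*n*k) * X 1 ^ b + X 0 ^ b * X 1 ^ (b + 2*n*k) : MvPolynomial (Fin 2) ℂ)
        = Rp ^ c * ((X 0 ^ (2*n)) ^ k + (X 1 ^ (2*n)) ^ k) := by
      subst hc
      rw [Rp]
      ring
    rw [hid]
    exact Sa.mul_mem (pow_mem hR c) (hplus k)
  · -- b = 2c+1 odd
    have hs1 : ((-1:ℂ)) ^ b = -1 := by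
      rw [hc]; exact Odd.neg_one_pow ⟨c, by omega⟩
    rw [hs1]
    obtain ⟨D, hDm, hD⟩ := hminus k
    have hC2 : (C (2:ℂ) * C (1/2 : ℂ) : MvPolynomial (Fin 2) ℂ) = 1 := by
      rw [← C_mul]; norm_num
    have hid : (X 0 ^ (b + 2*n*k) * X 1 ^ b
        + C (-1:ℂ) * (X 0 ^ b * X 1 ^ (b + 2*n*k)) : MvPolynomial (Fin 2) ℂ)
        = Rp ^ c * (C 2 * Pp n * D) := by
      subst hc
      rw [Rp, Pp, map_neg, C_1]
      linear_combination (X 0 ^ (2*c+1) * X 1 ^ (2*c+1) : MvPolynomial (Fin 2) ℂ) * hD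
        - ((X 0 * X 1 : MvPolynomial (Fin 2) ℂ) ^ (2*c+1)
            * ((X 0:MvPolynomial (Fin 2) ℂ) ^ (2*n) - X 1 ^ (2*n)) * D) * hC2
    rw [hid]
    exact Sa.mul_mem (pow_mem hR c) (Sa.mul_mem (Sa.mul_mem (by
      have : (C (2:ℂ) : MvPolynomial (Fin 2) ℂ) = (2:ℂ) • 1 := by simp [smul_eq_C_mul]
      rw [this]
      exact Sa.smul_mem Sa.one_mem _) hP) hDm)



lemma pair_mem {n : ℕ} (b k : ℕ) :
    (X 0 ^ (b + 2*n*k) * X 1 ^ b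
      + C ((-1:ℂ) ^ (b + 2*n*k)) * (X 0 ^ b * X 1 ^ (b + 2*n*k)) : MvPolynomial (Fin 2) ℂ) ∈ Rng n :=
  pair_mem_abstract (Rng n) Pp_mem Rp_mem (fun k => (newton k).1) (fun k => (newton k).2) b k

lemma aeval_scale (u v : ℂ) (f : MvPolynomial (Fin 2) ℂ) :
    aeval ![C u * X 0, C v * X 1] f
      = ∑ d ∈ f.support, monomial d (u ^ (d 0) * v ^ (d 1) * coeff d f) := by
  conv_lhs => rw [f.as_sum, map_sum]
  apply Finset.sum_congr rfl
  intro d _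
  rw [monomial_eq_two, monomial_eq_two, _root_.map_mul, _root_.map_mul, map_pow, map_pow,
    aeval_C, aeval_X, aeval_X]
  simp only [Matrix.cons_val_zero, Matrix.cons_val_one, Matrix.head_cons, algebraMap_eq]
  rw [mul_pow, mul_pow, ← C_pow, ← C_pow, C_mul, C_mul]
  ring

lemma coeff_aeval_scale (u v : ℂ) (f : MvPolynomial (Fin 2) ℂ) (d : Fin 2 →₀ ℕ) :
    coeff d (aeval ![C u * X 0, C v * X 1] f) = u ^ (d 0) * v ^ (d 1) * coeff d f := by
  rw [aeval_scale, coeff_sum]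
  simp only [coeff_monomial]
  rw [Finset.sum_ite_eq' f.support d (fun x => u ^ x 0 * v ^ x 1 * coeff x f)]
  by_cases h : d ∈ f.support
  · simp [h]
  · rw [notMem_support_iff.mp h]
    simp [h]


lemma pairgen {n : ℕ} (hn : 1 ≤ n) {ζ : ℂ} (hζ : IsPrimitiveRoot ζ (2*n)) {a b : ℕ}
    (hab : ζ ^ a = ζ ^ b) :
    (X 0 ^ a * X 1 ^ b + C ((-1:ℂ) ^ a) * (X 0 ^ b * X 1 ^ a) : MvPolynomial (Fin 2) ℂ) ∈ Rng n := by
  have hz : ζ ≠ 0 := hζ.ne_zero (by omega)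
  rcases le_total b a with hba | hab'
  · have h1 : ζ ^ (a - b) = 1 := by
      have h2 : ζ ^ (a - b) * ζ ^ b = 1 * ζ ^ b := by
        rw [← pow_add, one_mul]
        rw [Nat.sub_add_cancel hba, hab]
      exact mul_right_cancel₀ (pow_ne_zero _ hz) h2
    obtain ⟨k, hk⟩ := (hζ.pow_eq_one_iff_dvd _).mp h1
    have ha : a = b + 2*n*k := by omega
    rw [ha]
    exact pair_mem b k
  · have h1 : ζ ^ (b - a) = 1 := by
      have h2 : ζ ^ (b - a) * ζ ^ a = 1 * ζ ^ a := by
        rw [← pow_add, one_mul, Nat.sub_add_cancel hab', hab]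
      exact mul_right_cancel₀ (pow_ne_zero _ hz) h2
    obtain ⟨k, hk⟩ := (hζ.pow_eq_one_iff_dvd _).mp h1
    have hb : b = a + 2*n*k := by omega
    have hc : (C ((-1:ℂ) ^ a) * C ((-1:ℂ) ^ b) : MvPolynomial (Fin 2) ℂ) = 1 := by
      rw [← C_mul, ← pow_add]
      have : Even (a + b) := ⟨a + n*k, by rw [hb]; ring⟩
      rw [this.neg_one_pow, C_1]
    have hM := pair_mem (n := n) a k
    rw [← hb] at hM
    have heq : (X 0 ^ a * X 1 ^ b + C ((-1:ℂ) ^ a) * (X 0 ^ b * X 1 ^ a) : MvPolynomial (Fin 2) ℂ)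
        = C ((-1:ℂ) ^ a) * (X 0 ^ b * X 1 ^ a + C ((-1:ℂ) ^ b) * (X 0 ^ a * X 1 ^ b)) := by
      linear_combination (-(X 0 ^ a * X 1 ^ b) : MvPolynomial (Fin 2) ℂ) * hc
    rw [heq, ← smul_eq_C_mul]
    exact (Rng n).smul_mem hM _


lemma hnegpow (a : ℕ) : ((-X 1 : MvPolynomial (Fin 2) ℂ))^a = C ((-1:ℂ)^a) * X 1^a := by
  rw [neg_pow, map_pow, map_neg, C_1]

lemma invariant_mem {n : ℕ} (hn : 1 ≤ n) {ζ : ℂ} (hζ : IsPrimitiveRoot ζ (2*n))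
    (f : MvPolynomial (Fin 2) ℂ)
    (hfA : aeval ![C ζ⁻¹ * X 0, C ζ * X 1] f = f)
    (hfB : aeval ![-X 1, X 0] f = f) :
    f ∈ Rng n := by
  have hz : ζ ≠ 0 := hζ.ne_zero (by omega)
  -- support condition
  have hsupp : ∀ d ∈ f.support, ζ ^ (d 0 : ℕ) = ζ ^ (d 1 : ℕ) := by
    intro d hd
    have hc : coeff d f ≠ 0 := mem_support_iff.mp hd
    have h1 : (ζ⁻¹) ^ (d 0) * ζ ^ (d 1) * coeff d f = coeff d f := by
      rw [← coeff_aeval_scale, hfA]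
    have h2 : (ζ⁻¹) ^ (d 0) * ζ ^ (d 1) = 1 := by
      by_contra h
      apply hc
      have h3 : ((ζ⁻¹) ^ (d 0) * ζ ^ (d 1) - 1) * coeff d f = 0 := by linear_combination h1
      rcases mul_eq_zero.mp h3 with h' | h'
      · exact absurd (sub_eq_zero.mp h') h
      · exact h'
    rw [inv_pow] at h2
    exact (inv_mul_eq_one₀ (pow_ne_zero _ hz)).mp h2
  -- decomposition
  have key : ∀ d ∈ f.support,
      (monomial d (coeff d f) + aeval ![-X 1, X 0] (monomial d (coeff d f))) ∈ Rng n := by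
    intro d hd
    have heq : monomial d (coeff d f) + aeval ![-X 1, X 0] (monomial d (coeff d f))
        = C (coeff d f) * (X 0 ^ (d 0) * X 1 ^ (d 1)
            + C ((-1:ℂ) ^ (d 0)) * (X 0 ^ (d 1) * X 1 ^ (d 0))) := by
      rw [monomial_eq_two, _root_.map_mul, _root_.map_mul, map_pow, map_pow, aeval_C, aeval_X, aeval_X]
      simp only [Matrix.cons_val_zero, Matrix.cons_val_one, Matrix.head_cons, algebraMap_eq]
      rw [hnegpow]
      ring
    rw [heq, ← smul_eq_C_mul]
    exact (Rng n).smul_mem (pairgen hn hζ (hsupp d hd)) _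
  have hsum : f + aeval ![-X 1, X 0] f
      = ∑ d ∈ f.support, (monomial d (coeff d f) + aeval ![-X 1, X 0] (monomial d (coeff d f))) := by
    rw [Finset.sum_add_distrib, ← map_sum, ← f.as_sum]
  have hmem : f + aeval ![-X 1, X 0] f ∈ Rng n := by
    rw [hsum]
    exact Subalgebra.sum_mem _ key
  rw [hfB] at hmem
  have : f = (2⁻¹ : ℂ) • (f + f) := by
    rw [smul_add, ← add_smul]
    norm_num
  rw [this]
  exact (Rng n).smul_mem hmem _

lemma relzero (n : ℕ) : Pp n ^ 2 + Qp n ^ 2 * Rp + Rp ^ (n+1) = 0 := by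
  have h1 : ((C (1/2 : ℂ) : MvPolynomial (Fin 2) ℂ)) ^ 2 = C (1/4 : ℂ) := by
    rw [← C_pow]; norm_num
  have h2 : ((C (Complex.I/2 : ℂ) : MvPolynomial (Fin 2) ℂ)) ^ 2 = -C (1/4 : ℂ) := by
    rw [← C_pow, ← map_neg]
    congr 1
    rw [div_pow, Complex.I_sq]
    norm_num
  have h3 : ((C (1/4 : ℂ) : MvPolynomial (Fin 2) ℂ)) * 4 = 1 := by
    have h4 : ((4 : MvPolynomial (Fin 2) ℂ)) = C (4:ℂ) := by
      rw [map_ofNat]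
    rw [h4, ← C_mul]
    norm_num
  rw [Pp, Qp, Rp]
  linear_combination ((X 0 * X 1 * ((X 0:MvPolynomial (Fin 2) ℂ) ^ (2*n) - X 1 ^ (2*n)))^2) * h1
    + (((X 0:MvPolynomial (Fin 2) ℂ) ^ (2*n) + X 1 ^ (2*n))^2 * (X 0 ^ 2 * X 1 ^ 2)) * h2
    - ((X 0:MvPolynomial (Fin 2) ℂ) ^ (2*n+2) * X 1 ^ (2*n+2)) * h3


lemma tau_P (n : ℕ) : τ (Pp n) = - Pp n := by
  rw [Pp, τ]
  simp only [_root_.map_mul, map_sub, map_pow, aeval_C, aeval_X, algebraMap_eq,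
    Matrix.cons_val_zero, Matrix.cons_val_one, Matrix.head_cons]
  rw [Even.neg_pow ⟨n, by ring⟩]
  ring

lemma tau_Q (n : ℕ) : τ (Qp n) = Qp n := by
  rw [Qp, τ]
  simp only [_root_.map_mul, map_add, map_pow, aeval_C, aeval_X, algebraMap_eq,
    Matrix.cons_val_zero, Matrix.cons_val_one, Matrix.head_cons]
  rw [Even.neg_pow ⟨n, by ring⟩]

lemma tau_R : τ Rp = Rp := by
  rw [Rp, τ]
  simp only [_root_.map_mul, map_pow, aeval_X,
    Matrix.cons_val_zero, Matrix.cons_val_one, Matrix.head_cons]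
  ring

lemma tau_ev (n : ℕ) (s : MvPolynomial (Fin 2) ℂ) :
    τ (aeval ![Qp n, Rp] s) = aeval ![Qp n, Rp] s := by
  have hfun : (fun i => τ (![Qp n, Rp] i)) = ![Qp n, Rp] := by
    funext i
    fin_cases i
    · exact tau_Q n
    · exact tau_R
  have h : τ.comp (aeval ![Qp n, Rp]) = aeval ![Qp n, Rp] := by
    rw [comp_aeval, hfun]
  calc τ ((aeval ![Qp n, Rp]) s) = (τ.comp (aeval ![Qp n, Rp])) s := rfl
    _ = (aeval ![Qp n, Rp]) s := by rw [h]

lemma VW_ne (n : ℕ) (hn : 1 ≤ n) :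
    ((X 0:MvPolynomial (Fin 2) ℂ) ^ (2*n) - X 1 ^ (2*n)) ≠ 0 := by
  intro h
  have h1 : coeff (Finsupp.single 0 (2*n)) ((X 0:MvPolynomial (Fin 2) ℂ) ^ (2*n) - X 1 ^ (2*n)) = 1 := by
    rw [coeff_sub]
    rw [X_pow_eq_monomial, X_pow_eq_monomial, coeff_monomial, coeff_monomial]
    rw [if_pos rfl, if_neg]
    · norm_num
    · intro hs
      have := congrFun (congrArg (fun d : Fin 2 →₀ ℕ => (d : Fin 2 → ℕ)) hs) 0
      simp [Finsupp.single_apply] at this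
      omega
  rw [h] at h1
  simp at h1

lemma Pp_ne (n : ℕ) (hn : 1 ≤ n) : Pp n ≠ 0 := by
  rw [Pp]
  apply mul_ne_zero
  · simp only [ne_eq, C_eq_zero]
    norm_num
  · exact mul_ne_zero (mul_ne_zero (X_ne_zero _) (X_ne_zero _)) (VW_ne n hn)


lemma ev_monomial_expand (n : ℕ) (d : Fin 2 →₀ ℕ) (c : ℂ) :
    aeval ![Qp n, Rp] (monomial d c)
      = ∑ k ∈ Finset.range (d 0 + 1),
          C (c * (Complex.I/2) ^ (d 0) * (Nat.choose (d 0) k : ℂ))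
            * (X 0 ^ (2*(n*k) + 2*(d 1)) * X 1 ^ (2*(n*(d 0 - k)) + 2*(d 1))) := by
  rw [monomial_eq_two, _root_.map_mul, _root_.map_mul, map_pow, map_pow, aeval_C, aeval_X, aeval_X]
  simp only [Matrix.cons_val_zero, Matrix.cons_val_one, Matrix.head_cons, algebraMap_eq]
  rw [Qp, Rp, mul_pow (C (Complex.I/2)), ← C_pow, add_pow]
  simp only [Finset.mul_sum, Finset.sum_mul]
  apply Finset.sum_congr rfl
  intro k hk
  have hkle : k ≤ d 0 := by
    have := Finset.mem_range.mp hk; omega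
  have e1 : ((X 0:MvPolynomial (Fin 2) ℂ) ^ (2*n)) ^ k = X 0 ^ (2*(n*k)) := by
    rw [← pow_mul]; ring_nf
  have e2 : ((X 1:MvPolynomial (Fin 2) ℂ) ^ (2*n)) ^ (d 0 - k) = X 1 ^ (2*(n*(d 0 - k))) := by
    rw [← pow_mul]; ring_nf
  have e3 : ((X 0:MvPolynomial (Fin 2) ℂ) ^ 2 * X 1 ^ 2) ^ (d 1) = X 0 ^ (2*(d 1)) * X 1 ^ (2*(d 1)) := by
    rw [mul_pow, ← pow_mul, ← pow_mul]
  rw [e1, e2, e3, C_mul, C_mul, map_natCast]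
  rw [pow_add, pow_add]
  ring


lemma ev_inj (n : ℕ) (hn : 1 ≤ n) (s : MvPolynomial (Fin 2) ℂ)
    (hs : aeval ![Qp n, Rp] s = 0) : s = 0 := by
  by_contra hne
  have hsupp : s.support.Nonempty := support_nonempty.mpr hne
  set w : (Fin 2 →₀ ℕ) → ℕ := fun d => n * d 0 + d 1 with hw
  obtain ⟨dm, hdm, hdsup⟩ := Finset.exists_mem_eq_sup s.support hsupp w
  set i₀ := dm 0
  set j₀ := dm 1
  set t : Fin 2 →₀ ℕ := Finsupp.single 0 (2*(n*i₀) + 2*j₀) + Finsupp.single 1 (2*j₀) with ht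
  -- the key combinatorial fact
  have hcond : ∀ d ∈ s.support, ∀ k, k ≤ d 0 →
      (2*(n*k) + 2*(d 1) = 2*(n*i₀) + 2*j₀ ∧ 2*(n*(d 0 - k)) + 2*(d 1) = 2*j₀) →
      (k = d 0 ∧ d 1 = j₀ ∧ d 0 = i₀) := by
    intro d hd k hkle ⟨hk1, hk2⟩
    have hle : n * (d 0) + d 1 ≤ n * i₀ + j₀ := by
      have h := Finset.le_sup (f := w) hd
      rw [hdsup] at h
      simpa [hw] using h
    have ha1 : n*k ≤ n*(d 0) := Nat.mul_le_mul_left n hkle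
    have ha2 : n*(d 0 - k) + n*k = n*(d 0) := by
      rw [← Nat.mul_add]
      congr 1
      omega
    have h1 : n*k + d 1 = n*i₀ + j₀ := by omega
    have h2 : n*(d 0 - k) + d 1 = j₀ := by omega
    have hkk : n*k = n*(d 0) := by omega
    have hk0 : k = d 0 := Nat.eq_of_mul_eq_mul_left (by omega) hkk
    have hj : d 1 = j₀ := by omega
    have hi : n*(d 0) = n*i₀ := by omega
    exact ⟨hk0, hj, Nat.eq_of_mul_eq_mul_left (by omega) hi⟩
  -- coefficient of t in ev (monomial d c)
  have hTd : ∀ d ∈ s.support, d ≠ dm →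
      coeff t (aeval ![Qp n, Rp] (monomial d (coeff d s))) = 0 := by
    intro d hd hne'
    rw [ev_monomial_expand, coeff_sum]
    apply Finset.sum_eq_zero
    intro k hk
    rw [coeff_C_mul, X_pow_pair, coeff_monomial]
    rw [if_neg, mul_zero]
    intro heq
    rw [ht] at heq
    obtain ⟨he1, he2⟩ := (pair_eq_iff _ _ _ _).mp heq
    obtain ⟨hk0, hj, hi⟩ := hcond d hd k (by have := Finset.mem_range.mp hk; omega) ⟨by omega, he2⟩
    exact hne' (by
      apply Finsupp.ext
      intro a
      fin_cases a <;> simp [hj, hi, i₀, j₀])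
  have hTdm : coeff t (aeval ![Qp n, Rp] (monomial dm (coeff dm s)))
      = coeff dm s * (Complex.I/2) ^ i₀ := by
    rw [ev_monomial_expand, coeff_sum]
    rw [Finset.sum_eq_single_of_mem i₀ (Finset.mem_range.mpr (by omega))]
    · rw [coeff_C_mul, X_pow_pair, coeff_monomial, if_pos, Nat.choose_self]
      · push_cast
        ring
      · rw [ht]
        congr 2
        rw [Nat.sub_self, Nat.mul_zero]
        omega
    · intro k hk hkne
      rw [coeff_C_mul, X_pow_pair, coeff_monomial, if_neg, mul_zero]
      intro heq
      rw [ht] at heq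
      obtain ⟨he1, he2⟩ := (pair_eq_iff _ _ _ _).mp heq
      obtain ⟨hk0, hj, hi⟩ := hcond dm hdm k (by have := Finset.mem_range.mp hk; omega) ⟨by omega, he2⟩
      exact hkne (by omega)
  -- total
  have htot : coeff t (aeval ![Qp n, Rp] s) = coeff dm s * (Complex.I/2) ^ i₀ := by
    conv_lhs => rw [s.as_sum, map_sum, coeff_sum]
    rw [Finset.sum_eq_single_of_mem dm hdm]
    · exact hTdm
    · intro d hd hne'
      exact hTd d hd hne'
  rw [hs] at htot
  simp only [coeff_zero] at htot
  have : coeff dm s = 0 := by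
    rcases mul_eq_zero.mp htot.symm with h | h
    · exact h
    · exfalso
      exact pow_ne_zero _ (by
        simp only [ne_eq, div_eq_zero_iff]
        push_neg
        exact ⟨Complex.I_ne_zero, by norm_num⟩) h
  exact (mem_support_iff.mp hdm) this

-- the evaluation ring hom on Polynomial (MvPolynomial (Fin 2) ℂ)
def χ (n : ℕ) : Polynomial (MvPolynomial (Fin 2) ℂ) →+* MvPolynomial (Fin 2) ℂ :=
  Polynomial.eval₂RingHom ((aeval (R := ℂ) ![Qp n, Rp]) : MvPolynomial (Fin 2) ℂ →ₐ[ℂ] _).toRingHom (Pp n)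

lemma chi_comp (n : ℕ) (F : MvPolynomial (Fin 3) ℂ) :
    χ n ((MvPolynomial.finSuccEquiv ℂ 2) F) = aeval ![Pp n, Qp n, Rp] F := by
  have h : (χ n).comp ((MvPolynomial.finSuccEquiv ℂ 2) : MvPolynomial (Fin 3) ℂ →+* _)
      = ((aeval (R := ℂ) ![Pp n, Qp n, Rp]) : MvPolynomial (Fin 3) ℂ →ₐ[ℂ] _).toRingHom := by
    apply MvPolynomial.ringHom_ext
    · intro r
      simp [χ, MvPolynomial.finSuccEquiv_apply]
    · intro i
      refine Fin.cases ?_ (fun j => ?_) i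
      · simp [χ, MvPolynomial.finSuccEquiv_X_zero]
      · simp only [RingHom.comp_apply]
        have hxs : ((MvPolynomial.finSuccEquiv ℂ 2 : MvPolynomial (Fin 3) ℂ ≃ₐ[ℂ] Polynomial (MvPolynomial (Fin 2) ℂ)) : MvPolynomial (Fin 3) ℂ →+* Polynomial (MvPolynomial (Fin 2) ℂ)) (X j.succ)
            = Polynomial.C (X j) := by exact MvPolynomial.finSuccEquiv_X_succ
        rw [hxs]
        simp only [χ, Polynomial.coe_eval₂RingHom, Polynomial.eval₂_C]
        show (aeval ![Qp n, Rp]) (X j) = (aeval ![Pp n, Qp n, Rp]) (X j.succ)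
        rw [aeval_X, aeval_X]
        refine Fin.cases rfl (fun j' => ?_) j
        · fin_cases j' <;> rfl
  exact congrFun (congrArg (fun (ψ : MvPolynomial (Fin 3) ℂ →+* MvPolynomial (Fin 2) ℂ) => ψ.toFun) h) F

lemma ker_eq (n : ℕ) (hn : 1 ≤ n) :
    RingHom.ker (aeval (R := ℂ) ![Pp n, Qp n, Rp]).toRingHom
      = Ideal.span {(X 0 ^ 2 + X 1 ^ 2 * X 2 + X 2 ^ (n + 1) : MvPolynomial (Fin 3) ℂ)} := by
  set rel : MvPolynomial (Fin 3) ℂ := X 0 ^ 2 + X 1 ^ 2 * X 2 + X 2 ^ (n + 1) with hrel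
  have hrelzero : aeval (R := ℂ) ![Pp n, Qp n, Rp] rel = 0 := by
    rw [hrel]
    simp only [map_add, _root_.map_mul, map_pow, aeval_X]
    show Pp n ^ 2 + Qp n ^ 2 * Rp + Rp ^ (n+1) = 0
    exact relzero n
  set relP : Polynomial (MvPolynomial (Fin 2) ℂ) :=
    Polynomial.X ^ 2 + Polynomial.C ((X 0:MvPolynomial (Fin 2) ℂ) ^ 2 * X 1 + X 1 ^ (n+1)) with hrelP
  have hφrel : (MvPolynomial.finSuccEquiv ℂ 2) rel = relP := by
    rw [hrel, hrelP]
    simp only [map_add, _root_.map_mul, map_pow, MvPolynomial.finSuccEquiv_X_zero]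
    rw [show ((1:Fin 3)) = (0:Fin 2).succ from rfl, show ((2:Fin 3)) = (1:Fin 2).succ from rfl,
      MvPolynomial.finSuccEquiv_X_succ, MvPolynomial.finSuccEquiv_X_succ]
    ring
  have hmonic : relP.Monic := by
    rw [hrelP]
    apply Polynomial.monic_X_pow_add
    apply lt_of_le_of_lt (Polynomial.degree_C_le)
    norm_num
  have hchirel : χ n relP = 0 := by
    have := chi_comp n rel
    rw [hφrel] at this
    rw [this, hrelzero]
  apply le_antisymm
  · -- ker ⊆ span
    intro F hF
    have hF0 : aeval (R := ℂ) ![Pp n, Qp n, Rp] F = 0 := hF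
    set F' := (MvPolynomial.finSuccEquiv ℂ 2) F with hF'
    have hdiv := Polynomial.modByMonic_add_div F' relP
    have hdeg : (F' %ₘ relP).degree < 2 := by
      have h2 : relP.degree = 2 := by
        rw [hrelP, Polynomial.degree_add_eq_left_of_degree_lt, Polynomial.degree_X_pow]
        · norm_num
        · apply lt_of_le_of_lt (Polynomial.degree_C_le)
          rw [Polynomial.degree_X_pow]
          norm_num
      have := Polynomial.degree_modByMonic_lt F' hmonic
      rw [h2] at this
      exact this
    set S := F' %ₘ relP with hS
    have hSrep : S = Polynomial.C (S.coeff 1) * Polynomial.X + Polynomial.C (S.coeff 0) :=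
      Polynomial.eq_X_add_C_of_degree_le_one (Order.le_of_lt_succ hdeg)
    -- apply χ
    have hchiF : χ n F' = 0 := by
      rw [chi_comp n F, hF0]
    have hchiS : χ n S = 0 := by
      have := congrArg (χ n) hdiv
      rw [map_add, _root_.map_mul, hchirel, zero_mul, add_zero, hchiF] at this
      exact this
    -- χ S = ev s0 + ev s1 * P
    have hev : aeval ![Qp n, Rp] (S.coeff 0) + aeval ![Qp n, Rp] (S.coeff 1) * Pp n = 0 := by
      have h1 : χ n S = aeval ![Qp n, Rp] (S.coeff 1) * Pp n + aeval ![Qp n, Rp] (S.coeff 0) := by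
        conv_lhs => rw [hSrep]
        simp only [χ, Polynomial.coe_eval₂RingHom, Polynomial.eval₂_add, Polynomial.eval₂_mul,
          Polynomial.eval₂_C, Polynomial.eval₂_X]
        rfl
      rw [h1] at hchiS
      linear_combination hchiS
    -- apply τ
    have hev2 : aeval ![Qp n, Rp] (S.coeff 0) - aeval ![Qp n, Rp] (S.coeff 1) * Pp n = 0 := by
      have := congrArg τ hev
      rw [map_add, _root_.map_mul, map_zero, tau_ev, tau_ev, tau_P] at this
      linear_combination this
    have h0 : aeval ![Qp n, Rp] (S.coeff 0) = 0 := by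
      have h2 : (2 : MvPolynomial (Fin 2) ℂ) * aeval ![Qp n, Rp] (S.coeff 0) = 0 := by
        linear_combination hev + hev2
      rcases mul_eq_zero.mp h2 with h | h
      · exfalso
        rw [show (2 : MvPolynomial (Fin 2) ℂ) = C (2:ℂ) from (map_ofNat C 2).symm, C_eq_zero] at h
        norm_num at h
      · exact h
    have h1 : aeval ![Qp n, Rp] (S.coeff 1) = 0 := by
      have hP : aeval ![Qp n, Rp] (S.coeff 1) * Pp n = 0 := by
        linear_combination hev - h0
      rcases mul_eq_zero.mp hP with h | h
      · exact h
      · exact absurd h (Pp_ne n hn)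
    have hs0 : S.coeff 0 = 0 := ev_inj n hn _ h0
    have hs1 : S.coeff 1 = 0 := ev_inj n hn _ h1
    have hS0 : S = 0 := by
      rw [hSrep, hs0, hs1]
      simp
    -- conclude: rel ∣ F
    rw [hS0, zero_add] at hdiv
    have hsymmrel : (MvPolynomial.finSuccEquiv ℂ 2).symm relP = rel := by
      rw [← hφrel]
      exact AlgEquiv.symm_apply_apply _ _
    have h := congrArg (MvPolynomial.finSuccEquiv ℂ 2).symm hdiv
    rw [_root_.map_mul, hsymmrel, hF', AlgEquiv.symm_apply_apply] at h
    rw [Ideal.mem_span_singleton]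
    exact ⟨_, h.symm⟩
  · -- span ⊆ ker
    rw [Ideal.span_le]
    intro x hx
    rw [Set.mem_singleton_iff.mp hx]
    show rel ∈ RingHom.ker _
    rw [RingHom.mem_ker]
    exact hrelzero


/-- The ring of invariants of the binary dihedral group of order `4n` (the subgroup of
`SU(2) ⊆ GL₂(ℂ)` generated by `diag(ζ, ζ⁻¹)` with `ζ` a primitive `2n`-th root of unity and
`[[0,1],[−1,0]]`) acting on `ℂ[x,y]` by substitution is generated by three homogeneous
invariant polynomials `P, Q, R` of degrees `2n+2`, `2n`, `4` respectively, subject to the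
single relation `P² + Q²R + R^{n+1} = 0`: the algebra map `ℂ[X,Y,Z] → ℂ[x,y]`,
`X ↦ P, Y ↦ Q, Z ↦ R` has image the invariant ring and kernel the ideal
generated by `X² + Y²Z + Z^{n+1}`. -/
theorem binary_dihedral_invariant_ring
    (n : ℕ) (hn : 1 ≤ n) (ζ : ℂ) (hζ : IsPrimitiveRoot ζ (2 * n))
    (A B : GL (Fin 2) ℂ)
    (hA : (A : Matrix (Fin 2) (Fin 2) ℂ) = !![ζ, 0; 0, ζ⁻¹])
    (hB : (B : Matrix (Fin 2) (Fin 2) ℂ) = !![0, 1; -1, 0])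
    (G : Subgroup (GL (Fin 2) ℂ)) (hG : G = Subgroup.closure {A, B}) :
    ∃ P Q R : MvPolynomial (Fin 2) ℂ,
      P.IsHomogeneous (2 * n + 2) ∧ Q.IsHomogeneous (2 * n) ∧ R.IsHomogeneous 4 ∧
      (∀ g ∈ G, ∀ f ∈ ({P, Q, R} : Set (MvPolynomial (Fin 2) ℂ)),
        aeval (fun i : Fin 2 =>
          ∑ j : Fin 2, C (((g⁻¹ : GL (Fin 2) ℂ) : Matrix (Fin 2) (Fin 2) ℂ) i j) * X j) f = f) ∧
      (∀ f : MvPolynomial (Fin 2) ℂ,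
        f ∈ (aeval (R := ℂ) ![P, Q, R]).range ↔
          ∀ g ∈ G, aeval (fun i : Fin 2 =>
            ∑ j : Fin 2, C (((g⁻¹ : GL (Fin 2) ℂ) : Matrix (Fin 2) (Fin 2) ℂ) i j) * X j) f = f) ∧
      RingHom.ker (aeval (R := ℂ) ![P, Q, R]).toRingHom
        = Ideal.span {(X 0 ^ 2 + X 1 ^ 2 * X 2 + X 2 ^ (n + 1) : MvPolynomial (Fin 3) ℂ)} := by
  have hz : ζ ≠ 0 := hζ.ne_zero (by omega)
  have hz2 : ζ ^ (2*n) = 1 := hζ.pow_eq_one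
  have hAG : A ∈ G := by
    rw [hG]; exact Subgroup.subset_closure (by simp)
  have hBG : B ∈ G := by
    rw [hG]; exact Subgroup.subset_closure (by simp)
  -- invariance of generators under every element of G
  have hinv : ∀ g ∈ G, ∀ f ∈ ({Pp n, Qp n, Rp} : Set (MvPolynomial (Fin 2) ℂ)),
      bdact g f = f := by
    intro g hg f hf
    have hstab : ∀ p ∈ ({Pp n, Qp n, Rp} : Set (MvPolynomial (Fin 2) ℂ)), g ∈ bdstab p := by
      intro p hp
      have hle : Subgroup.closure {A, B} ≤ bdstab p := by
        apply closure_le_stab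
        · rw [bdactA ζ hz A hA]
          simp only [Set.mem_insert_iff, Set.mem_singleton_iff] at hp
          rcases hp with rfl | rfl | rfl
          · exact actA_P hz hz2
          · exact actA_Q hz hz2
          · exact actA_R hz hz2
        · rw [bdactB B hB]
          simp only [Set.mem_insert_iff, Set.mem_singleton_iff] at hp
          rcases hp with rfl | rfl | rfl
          · exact actB_P
          · exact actB_Q
          · exact actB_R
      exact hle (hG ▸ hg)
    exact hstab f hf
  refine ⟨Pp n, Qp n, Rp, ?_, ?_, Rp_hom, ?_, ?_, ker_eq n hn⟩
  · have := Pp_hom n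
    convert this using 2
  · exact Qp_hom n
  · -- invariance statement
    intro g hg f hf
    exact hinv g hg f hf
  · -- range characterization
    intro f
    constructor
    · rintro ⟨q, hq⟩ g hg
      show bdact g f = f
      rw [← hq]
      have hfun : (fun i => bdact g (![Pp n, Qp n, Rp] i)) = ![Pp n, Qp n, Rp] := by
        funext i
        fin_cases i
        · exact hinv g hg _ (by simp)
        · exact hinv g hg _ (by simp)
        · exact hinv g hg _ (by simp)
      have hcomp : (bdact g).comp (aeval ![Pp n, Qp n, Rp]) = aeval ![Pp n, Qp n, Rp] := by
        rw [comp_aeval, hfun]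
      calc bdact g ((aeval ![Pp n, Qp n, Rp]) q)
          = ((bdact g).comp (aeval ![Pp n, Qp n, Rp])) q := rfl
        _ = (aeval ![Pp n, Qp n, Rp]) q := by rw [hcomp]
    · intro hgf
      have hfA : bdact A f = f := hgf A hAG
      have hfB : bdact B f = f := hgf B hBG
      rw [bdactA ζ hz A hA] at hfA
      rw [bdactB B hB] at hfB
      have h2n : 2 * n = 2*n := rfl
      exact invariant_mem hn hζ f hfA hfB

end BDproof
end
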